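/- Let X = X_1 + ... + X_K where the X_k are independent exponential random variables with rates a_k > 0, and let a_* = min_k a_k. Then for every δ > 0, P(X ≥ (1+δ)·E[X]) ≤ (1/(1+δ))·exp(−a_*·E[X]·(δ − log(1+δ))). -/

import Mathlib

/-!
Split off a summand `X k₀` of minimal rate `m` and let `Y` be the sum of the others. Conditioning
on `Y`, the tail bound `P(X k₀ ≥ c) ≤ exp (-u c)`, valid for every real `c` once `0 ≤ u ≤ m`, gives
`P(X ≥ x) ≤ exp (-u x) E[exp (u Y)]`: unlike a plain Chernoff bound, the summand `X k₀` contributes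
no moment generating factor, and this is what produces the prefactor `1 / (1 + δ)`.
For `u = m (1 - 1/λ)` with `λ = 1 + δ`, Bernoulli's inequality bounds each remaining factor
`a k / (a k - u)` by `λ ^ (m / a k)`, so that `P(X ≥ λ E[X]) ≤ exp (-m δ E[X]) λ ^ (m E[X] - 1)`.
-/

open ProbabilityTheory MeasureTheory Finset Real

namespace ProbabilityTheory

variable {Ω : Type*} [MeasurableSpace Ω] {P : Measure Ω} {r u : ℝ}

lemma mgf_id_expMeasure (hr : 0 < r) (hur : u < r) :
    mgf id (expMeasure r) u = r / (r - u) := by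
  have hdensity : ∀ x, (exponentialPDF r x).toReal • exp (u * x)
      = (Set.Ici 0).indicator (fun x ↦ r * exp ((u - r) * x)) x := by
    intro x
    rcases le_or_gt 0 x with hx | hx
    · rw [Set.indicator_of_mem (Set.mem_Ici.2 hx), exponentialPDF_of_nonneg hx,
        ENNReal.toReal_ofReal (by positivity), smul_eq_mul, mul_assoc, ← exp_add]
      ring_nf
    · simp [exponentialPDF_of_neg hx, hx.not_ge]
  have hmeas : Measurable (exponentialPDF r) := (measurable_exponentialPDFReal r).ennreal_ofReal
  change ∫ x, exp (u * x) ∂(volume.withDensity (exponentialPDF r)) = _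
  rw [integral_withDensity_eq_integral_toReal_smul hmeas
      (ae_of_all _ fun _ ↦ ENNReal.ofReal_lt_top), integral_congr_ae (ae_of_all _ hdensity),
    integral_indicator measurableSet_Ici, integral_Ici_eq_integral_Ioi, integral_const_mul,
    integral_exp_mul_Ioi (by linarith), mul_zero, exp_zero]
  rw [← neg_sub r u, div_neg, neg_div, mul_neg, mul_neg, neg_neg, mul_one_div]

lemma expMeasure_Ici_le (hr : 0 < r) (hu : 0 ≤ u) (hur : u ≤ r) (c : ℝ) :
    expMeasure r (Set.Ici c) ≤ ENNReal.ofReal (exp (-(u * c))) := by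
  have := isProbabilityMeasure_expMeasure hr
  rcases le_or_gt c 0 with hc | hc
  · refine prob_le_one.trans ?_
    rw [ENNReal.one_le_ofReal, one_le_exp_iff]
    nlinarith
  have : NullSingletonClass (expMeasure r) := nullSingletonClass_withDensity _
  have hexp_le : exp (-(r * c)) ≤ 1 := exp_le_one_iff.2 (by nlinarith)
  rw [← measure_congr Ioi_ae_eq_Ici, ← Set.compl_Iic, prob_compl_eq_one_sub measurableSet_Iic,
    ← ofReal_cdf, cdf_expMeasure_eq hr, if_pos hc.le, ← ENNReal.ofReal_one,
    ← ENNReal.ofReal_sub _ (by linarith), sub_sub_cancel]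
  exact ENNReal.ofReal_le_ofReal (exp_le_exp.2 (by nlinarith))

lemma map_eq_expMeasure_of_cdf [IsProbabilityMeasure P] {Z : Ω → ℝ} (hr : 0 < r)
    (hZ : AEMeasurable Z P)
    (hcdf : ∀ t, 0 ≤ t → P {ω | Z ω ≤ t} = ENNReal.ofReal (1 - exp (-r * t))) :
    P.map Z = expMeasure r := by
  have := isProbabilityMeasure_expMeasure hr
  have := Measure.isProbabilityMeasure_map (μ := P) hZ
  refine Measure.ext_of_Iic _ _ fun t ↦ ?_
  rw [Measure.map_apply_of_aemeasurable hZ measurableSet_Iic, ← ofReal_cdf, cdf_expMeasure_eq hr]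
  split_ifs with ht
  · rw [← neg_mul]
    exact hcdf t ht
  · have h0 : P {ω | Z ω ≤ 0} = 0 := by simpa using hcdf 0 le_rfl
    rw [ENNReal.ofReal_zero]
    exact measure_mono_null (fun ω (hω : Z ω ≤ t) ↦ show Z ω ≤ 0 by linarith) h0

lemma mgf_of_map_eq_expMeasure {Z : Ω → ℝ} (hZ : AEMeasurable Z P)
    (hlaw : P.map Z = expMeasure r) (hr : 0 < r) (hur : u < r) :
    mgf Z P u = r / (r - u) := by
  rw [← mgf_id_map hZ, hlaw, mgf_id_expMeasure hr hur]

lemma integrable_exp_mul_of_map_eq_expMeasure [IsProbabilityMeasure P] {Z : Ω → ℝ}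
    (hZ : AEMeasurable Z P) (hlaw : P.map Z = expMeasure r) (hr : 0 < r) (hur : u < r) :
    Integrable (fun ω ↦ exp (u * Z ω)) P := by
  refine mgf_pos_iff.1 ?_
  rw [mgf_of_map_eq_expMeasure hZ hlaw hr hur]
  exact div_pos hr (sub_pos.2 hur)

theorem IndepFun.measure_add_ge_le_exp_mul_mgf [IsFiniteMeasure P] {Y Z : Ω → ℝ} (hY : Measurable Y)
    (hZ : Measurable Z) (hYZ : IndepFun Y Z P)
    (htail : ∀ c, P.map Z (Set.Ici c) ≤ ENNReal.ofReal (exp (-(u * c))))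
    (hint : Integrable (fun ω ↦ exp (u * Y ω)) P) (x : ℝ) :
    P {ω | x ≤ Y ω + Z ω} ≤ ENNReal.ofReal (exp (-(u * x)) * mgf Y P u) := by
  have hS : MeasurableSet {p : ℝ × ℝ | x ≤ p.1 + p.2} :=
    measurableSet_le measurable_const (measurable_fst.add measurable_snd)
  have hslice : ∀ y, Prod.mk y ⁻¹' {p : ℝ × ℝ | x ≤ p.1 + p.2} = Set.Ici (x - y) := fun y ↦ by
    ext z
    simp [add_comm]
  have hexp : Measurable fun y ↦ ENNReal.ofReal (exp (u * y)) := by fun_prop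
  calc P {ω | x ≤ Y ω + Z ω}
      = (P.map Y).prod (P.map Z) {p | x ≤ p.1 + p.2} := by
        rw [← (indepFun_iff_map_prod_eq_prod_map_map hY.aemeasurable hZ.aemeasurable).1 hYZ,
          Measure.map_apply (hY.prodMk hZ) hS]
        rfl
    _ = ∫⁻ y, P.map Z (Set.Ici (x - y)) ∂P.map Y := by
        simp only [Measure.prod_apply hS, hslice]
    _ ≤ ∫⁻ y, ENNReal.ofReal (exp (-(u * x))) * ENNReal.ofReal (exp (u * y)) ∂P.map Y := by
        refine lintegral_mono fun y ↦ (htail (x - y)).trans_eq ?_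
        rw [← ENNReal.ofReal_mul (exp_nonneg _), ← exp_add]
        ring_nf
    _ = ENNReal.ofReal (exp (-(u * x)) * mgf Y P u) := by
        rw [lintegral_const_mul _ hexp, lintegral_map hexp hY,
          ← ofReal_integral_eq_lintegral_ofReal hint (ae_of_all _ fun _ ↦ (exp_pos _).le),
          ← ENNReal.ofReal_mul (exp_nonneg _)]
        rfl

lemma div_sub_mul_one_sub_inv_le_rpow {m r lam : ℝ} (hm : 0 < m) (hmr : m ≤ r) (hlam : 0 < lam) :
    r / (r - m * (1 - lam⁻¹)) ≤ lam ^ (m / r) := by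
  have hr : 0 < r := hm.trans_le hmr
  have hbernoulli : lam⁻¹ ^ (m / r) ≤ 1 - m / r * (1 - lam⁻¹) := by
    have := rpow_one_add_le_one_add_mul_self (s := lam⁻¹ - 1) (by linarith [inv_pos.2 hlam])
      (div_nonneg hm.le hr.le) ((div_le_one hr).2 hmr)
    rwa [add_sub_cancel, ← neg_sub, mul_neg, ← sub_eq_add_neg] at this
  calc r / (r - m * (1 - lam⁻¹)) = (1 - m / r * (1 - lam⁻¹))⁻¹ := by
        field_simp
    _ ≤ (lam⁻¹ ^ (m / r))⁻¹ := inv_anti₀ (rpow_pos_of_pos (inv_pos.2 hlam) _) hbernoulli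
    _ = lam ^ (m / r) := by rw [inv_rpow hlam.le, inv_inv]

section SumOfExponentials

variable {ι : Type*} {X : ι → Ω → ℝ} {s : Finset ι} {a : ι → ℝ}

lemma iIndepFun.mgf_sum_le_rpow (hindep : iIndepFun X P) (hmeas : ∀ i, Measurable (X i))
    (hlaw : ∀ i ∈ s, P.map (X i) = expMeasure (a i)) {m lam : ℝ} (hm : 0 < m)
    (hma : ∀ i ∈ s, m ≤ a i) (hlam : 0 < lam) :
    mgf (∑ i ∈ s, X i) P (m * (1 - lam⁻¹)) ≤ lam ^ (∑ i ∈ s, m / a i) := by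
  have hu : m * (1 - lam⁻¹) < m := by nlinarith [inv_pos.2 hlam]
  rw [hindep.mgf_sum hmeas, rpow_sum_of_pos hlam]
  refine prod_le_prod (fun i hi ↦ mgf_nonneg) fun i hi ↦ ?_
  rw [mgf_of_map_eq_expMeasure (hmeas i).aemeasurable (hlaw i hi) (hm.trans_le (hma i hi))
    (hu.trans_le (hma i hi))]
  exact div_sub_mul_one_sub_inv_le_rpow hm (hma i hi) hlam

theorem iIndepFun.measure_sum_ge_le_of_map_eq_expMeasure [IsProbabilityMeasure P] [DecidableEq ι]
    (hindep : iIndepFun X P) (hmeas : ∀ i, Measurable (X i))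
    (hlaw : ∀ i ∈ s, P.map (X i) = expMeasure (a i)) {i₀ : ι} (hi₀ : i₀ ∈ s) (hpos : 0 < a i₀)
    (hmin : ∀ i ∈ s, a i₀ ≤ a i) {lam : ℝ} (hlam : 1 ≤ lam) (x : ℝ) :
    P {ω | x ≤ ∑ i ∈ s, X i ω} ≤ ENNReal.ofReal
      (exp (-(a i₀ * (1 - lam⁻¹) * x)) * lam ^ (∑ i ∈ s.erase i₀, a i₀ / a i)) := by
  have hu : 0 ≤ a i₀ * (1 - lam⁻¹) ∧ a i₀ * (1 - lam⁻¹) < a i₀ := by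
    have : 0 < lam⁻¹ ∧ lam⁻¹ ≤ 1 := ⟨inv_pos.2 (by linarith), inv_le_one_of_one_le₀ hlam⟩
    constructor <;> nlinarith
  have hsplit : ∀ ω, ∑ i ∈ s, X i ω = (∑ i ∈ s.erase i₀, X i) ω + X i₀ ω := fun ω ↦ by
    rw [Finset.sum_apply, sum_erase_add _ _ hi₀]
  have htail : ∀ c, P.map (X i₀) (Set.Ici c) ≤ ENNReal.ofReal (exp (-(a i₀ * (1 - lam⁻¹) * c))) :=
    hlaw i₀ hi₀ ▸ expMeasure_Ici_le hpos hu.1 hu.2.le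
  have hint := hindep.integrable_exp_mul_sum (s := s.erase i₀) hmeas fun i hi ↦
    integrable_exp_mul_of_map_eq_expMeasure (hmeas i).aemeasurable (hlaw i (mem_of_mem_erase hi))
      (hpos.trans_le (hmin i (mem_of_mem_erase hi))) (hu.2.trans_le (hmin i (mem_of_mem_erase hi)))
  simp_rw [hsplit]
  refine (IndepFun.measure_add_ge_le_exp_mul_mgf (by fun_prop) (hmeas i₀)
    (hindep.indepFun_finsetSum_of_notMem hmeas (notMem_erase i₀ s)) htail hint x).trans ?_
  gcongr
  exact hindep.mgf_sum_le_rpow hmeas (fun i hi ↦ hlaw i (mem_of_mem_erase hi)) hpos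
    (fun i hi ↦ hmin i (mem_of_mem_erase hi)) (by linarith)

end SumOfExponentials

end ProbabilityTheory

/-- **Upper tail bound for sums of independent exponentials** (Janson, Thm 5.1(i)).
`X = X_0 + ⋯ + X_{K-1}` with independent `X k ~ Exp(a k)`, `a_* = min_k a k`,
`E[X] = ∑ 1/(a k)`.  For every `δ > 0`,
`P(X ≥ (1+δ)E[X]) ≤ (1/(1+δ)) exp(−a_* E[X] (δ − log(1+δ)))`. -/
theorem sum_exponential_upper_tail
    {Ω : Type*} [MeasurableSpace Ω] (P : Measure Ω) [IsProbabilityMeasure P]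
    (K : ℕ) (hK : 0 < K) (a : ℕ → ℝ) (ha : ∀ k < K, 0 < a k)
    (X : ℕ → Ω → ℝ) (hmeas : ∀ k, Measurable (X k))
    (hindep : iIndepFun X P)
    (hexp : ∀ k < K, ∀ t : ℝ, 0 ≤ t →
      P {ω | X k ω ≤ t} = ENNReal.ofReal (1 - Real.exp (-(a k) * t)))
    (δ : ℝ) (hδ : 0 < δ) :
    P {ω | (1 + δ) * (∑ k ∈ range K, 1 / a k) ≤ ∑ k ∈ range K, X k ω}
      ≤ ENNReal.ofReal ((1 / (1 + δ)) *
          Real.exp (-((range K).inf' (nonempty_range_iff.mpr hK.ne') a)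
            * (∑ k ∈ range K, 1 / a k) * (δ - Real.log (1 + δ)))) := by
  classical
  obtain ⟨k₀, hk₀, hmin⟩ := exists_mem_eq_inf' (nonempty_range_iff.mpr hK.ne') a
  have hlaw : ∀ k ∈ range K, P.map (X k) = expMeasure (a k) := fun k hk ↦
    map_eq_expMeasure_of_cdf (ha k (mem_range.1 hk)) (hmeas k).aemeasurable
      (hexp k (mem_range.1 hk))
  refine (hindep.measure_sum_ge_le_of_map_eq_expMeasure hmeas hlaw hk₀ (ha k₀ (mem_range.1 hk₀))
    (fun k hk ↦ hmin ▸ inf'_le a hk) (by linarith : (1 : ℝ) ≤ 1 + δ) _).trans_eq ?_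
  rw [← hmin]
  set m := (range K).inf' (nonempty_range_iff.mpr hK.ne') a
  set μ := ∑ k ∈ range K, 1 / a k
  have hm : 0 < m := hmin ▸ ha k₀ (mem_range.1 hk₀)
  have hexponent : ∑ k ∈ (range K).erase k₀, m / a k = m * μ - 1 := by
    rw [sum_erase_eq_sub hk₀, ← hmin, div_self hm.ne', mul_sum]
    simp_rw [mul_one_div]
  have hux : m * (1 - (1 + δ)⁻¹) * ((1 + δ) * μ) = m * μ * δ := by
    field_simp
    ring
  rw [hexponent, hux, rpow_sub (by linarith), rpow_one, rpow_def_of_pos (by linarith),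
    mul_div_assoc', ← exp_add, div_eq_inv_mul, one_div]
  ring_nf
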